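/- Let N ≥ 1, p > 1 and −N < α < N(p−1). Then the weight w on ℝ^N defined by w(x) = |x|^α for |x| ≤ 1 and w(x) = exp(|x| − 1) for |x| > 1 belongs to the class 𝒜_p^loc. -/

import Mathlib

open MeasureTheory

/-- The axis-parallel cube in `ℝ^N` with center `a` and side length `h`. -/
def locCube (N : ℕ) (a : Fin N → ℝ) (h : ℝ) : Set (Fin N → ℝ) :=
  Set.univ.pi fun i => Set.Icc (a i - h / 2) (a i + h / 2)

/-- The local Muckenhoupt quantity of the weight `w` on the cube with center `a`
and side `h`: for `p = 1` it is `(w(Q)/|Q|) · ess sup_Q (1/w)`, and for `p > 1` it is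
`(w(Q)/|Q|) · ((1/|Q|) ∫_Q w^(1-p'))^(p/p')` where `p' = p/(p-1)`. -/
noncomputable def apLocQuantity (N : ℕ) (p : ℝ) (w : (Fin N → ℝ) → ℝ)
    (a : Fin N → ℝ) (h : ℝ) : ℝ :=
  if p = 1 then
    ((∫ x in locCube N a h, w x) / h ^ N) *
      essSup (fun x => (w x)⁻¹) (volume.restrict (locCube N a h))
  else
    ((∫ x in locCube N a h, w x) / h ^ N) *
      ((h ^ N)⁻¹ * ∫ x in locCube N a h, (w x) ^ (1 - p / (p - 1))) ^ (p / (p / (p - 1)))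

/-- `w` belongs to the local Muckenhoupt class `𝒜_p^loc` on `ℝ^N`: it is a weight
(locally integrable and a.e. positive) whose local Muckenhoupt quantities over all
axis-parallel cubes of volume at most `1` are uniformly bounded. -/
def MemApLoc (N : ℕ) (p : ℝ) (w : (Fin N → ℝ) → ℝ) : Prop :=
  LocallyIntegrable w volume ∧
  (∀ᵐ x ∂(volume : Measure (Fin N → ℝ)), 0 < w x) ∧
  ∃ C : ℝ, ∀ (a : Fin N → ℝ) (h : ℝ), 0 < h → h ^ N ≤ 1 → apLocQuantity N p w a h ≤ C

/-!
Write `ρ = |x|` and `w = g(ρ)` with `g(t) = min(t, 1)^c · exp(d · max(t - 1, 0))`, where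
`c = α` and `d = 1`. Then `w^(1-p')` has the same shape with `(c, d)` replaced by
`(c, d)·(1-p')`, and `-N < c (1-p')` is exactly `α < N (p-1)`. Fix a cube `Q` of side `h ≤ 1`
and centre `a`. If `|a| ≤ 2√N h`, then `Q` lies in the ball of radius `3√N h`, where
`g(ρ) ≲ ρ^c`; since `∫_{|x|<r} |x|^c = r^(N+c) ∫_{|x|<1} |x|^c` with a finite integral for
`c > -N`, the average of `w` over `Q` is `≲ h^c`. Otherwise `|x|/|a| ∈ [3/4, 5/4]` and
`||x| - |a|| ≤ √N` on `Q`, so `w` is comparable to `w(a)` there. In either case the averages of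
`w` and `w^(1-p')` are at most `K λ` and `K λ^(1-p')` for one scale `λ`, and the Muckenhoupt
product is at most `K^p`.
-/

open Real Metric Module Set WithLp

theorem rpow_le_rpow_abs_mul_rpow {b s t : ℝ} (c : ℝ) (hb : 1 ≤ b) (hs : 0 ≤ s)
    (h₁ : b⁻¹ * s ≤ t) (h₂ : t ≤ b * s) : t ^ c ≤ b ^ |c| * s ^ c := by
  rcases hs.eq_or_lt with rfl | hs
  · obtain rfl : t = 0 := by simp at h₁ h₂; linarith
    exact le_mul_of_one_le_left (rpow_nonneg le_rfl c) (one_le_rpow hb (abs_nonneg c))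
  have ht : 0 < t := lt_of_lt_of_le (by positivity) h₁
  rcases le_or_gt 0 c with hc | hc
  · calc t ^ c ≤ (b * s) ^ c := rpow_le_rpow ht.le h₂ hc
      _ = b ^ |c| * s ^ c := by rw [mul_rpow (by linarith) hs.le, abs_of_nonneg hc]
  · calc t ^ c ≤ (b⁻¹ * s) ^ c := rpow_le_rpow_of_nonpos (by positivity) h₁ hc.le
      _ = b ^ |c| * s ^ c := by
        rw [mul_rpow (by positivity) hs.le, inv_rpow (by linarith), ← rpow_neg (by linarith),
          abs_of_neg hc]

noncomputable def powExpProfile (c d t : ℝ) : ℝ := min t 1 ^ c * exp (d * max (t - 1) 0)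

theorem powExpProfile_pos {t : ℝ} (c d : ℝ) (ht : 0 < t) : 0 < powExpProfile c d t := by
  unfold powExpProfile; have := lt_min ht one_pos; positivity

theorem powExpProfile_nonneg {t : ℝ} (c d : ℝ) (ht : 0 ≤ t) : 0 ≤ powExpProfile c d t := by
  unfold powExpProfile; have := le_min ht zero_le_one; positivity

theorem powExpProfile_rpow {t : ℝ} (c d e : ℝ) (ht : 0 ≤ t) :
    powExpProfile c d t ^ e = powExpProfile (c * e) (d * e) t := by
  have := le_min ht zero_le_one
  rw [powExpProfile, powExpProfile, mul_rpow (by positivity) (exp_pos _).le, ← rpow_mul this,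
    ← exp_mul, mul_right_comm]

theorem measurable_powExpProfile (c d : ℝ) : Measurable (powExpProfile c d) := by
  unfold powExpProfile; fun_prop

theorem powExpProfile_le_mul_rpow {c d t T : ℝ} (hT : 1 ≤ T) (ht : 0 ≤ t) (htT : t ≤ T) :
    powExpProfile c d t ≤ T ^ |c| * exp (|d| * T) * t ^ c := by
  have hpow : min t 1 ^ c ≤ T ^ |c| * t ^ c := by
    refine rpow_le_rpow_abs_mul_rpow c hT ht (le_min ?_ ?_) ((min_le_left _ _).trans ?_)
    · exact mul_le_of_le_one_left ht (inv_le_one_of_one_le₀ hT)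
    · rwa [inv_mul_le_iff₀ (by linarith), mul_one]
    · exact le_mul_of_one_le_left ht hT
  have hexp : exp (d * max (t - 1) 0) ≤ exp (|d| * T) := by
    refine exp_le_exp.2 ?_
    calc d * max (t - 1) 0 ≤ |d| * max (t - 1) 0 := by gcongr; exact le_abs_self d
      _ ≤ |d| * T := by gcongr; exact max_le (by linarith) (by linarith)
  calc powExpProfile c d t ≤ T ^ |c| * t ^ c * exp (|d| * T) :=
        mul_le_mul hpow hexp (exp_pos _).le (by positivity)
    _ = T ^ |c| * exp (|d| * T) * t ^ c := by ring

theorem powExpProfile_le_mul_of_ratio {b c d m t : ℝ} (hb : 1 ≤ b) (hm : 0 ≤ m)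
    (h₁ : b⁻¹ * m ≤ t) (h₂ : t ≤ b * m) :
    powExpProfile c d t ≤ b ^ |c| * exp (|d| * |t - m|) * powExpProfile c d m := by
  have hpow : min t 1 ^ c ≤ b ^ |c| * min m 1 ^ c := by
    refine rpow_le_rpow_abs_mul_rpow c hb (le_min hm zero_le_one) (le_min ?_ ?_) ?_
    · exact (mul_le_mul_of_nonneg_left (min_le_left _ _) (by positivity)).trans h₁
    · calc b⁻¹ * min m 1 ≤ 1 * 1 :=
            mul_le_mul (inv_le_one_of_one_le₀ hb) (min_le_right _ _) (by positivity) zero_le_one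
        _ = 1 := one_mul 1
    · rw [mul_min_of_nonneg _ _ (by linarith : (0 : ℝ) ≤ b), mul_one]
      exact min_le_min h₂ hb
  have hexp : exp (d * max (t - 1) 0) ≤ exp (|d| * |t - m|) * exp (d * max (m - 1) 0) := by
    have hlip : |max (t - 1) 0 - max (m - 1) 0| ≤ |t - m| := by
      simpa using abs_max_sub_max_le_abs (t - 1) (m - 1) 0
    have : d * (max (t - 1) 0 - max (m - 1) 0) ≤ |d| * |t - m| :=
      (le_abs_self _).trans ((abs_mul _ _).trans_le (by gcongr))
    rw [← exp_add]
    gcongr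
    linarith
  calc powExpProfile c d t
      ≤ b ^ |c| * min m 1 ^ c * (exp (|d| * |t - m|) * exp (d * max (m - 1) 0)) :=
        mul_le_mul hpow hexp (exp_pos _).le (by have := le_min hm zero_le_one; positivity)
    _ = b ^ |c| * exp (|d| * |t - m|) * powExpProfile c d m := by unfold powExpProfile; ring

section NormedSpace

variable {E : Type*} [NormedAddCommGroup E] [NormedSpace ℝ E] [FiniteDimensional ℝ E]
  [MeasurableSpace E] [BorelSpace E] (μ : Measure E) [μ.IsAddHaarMeasure]

theorem integrableOn_rpow_norm_ball [Nontrivial E] {γ : ℝ} (hγ : -(finrank ℝ E : ℝ) < γ)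
    (r : ℝ) : IntegrableOn (fun x => ‖x‖ ^ γ) (ball 0 r) μ := by
  rw [integrableOn_fun_norm_addHaar μ (f := fun t => t ^ γ)]
  rcases le_or_gt r 0 with hr | hr
  · simp [Ioo_eq_empty_of_le hr]
  have hn : 1 ≤ finrank ℝ E := finrank_pos
  have hpow : IntegrableOn (fun y : ℝ => y ^ (((finrank ℝ E - 1 : ℕ) : ℝ) + γ)) (Ioo 0 r) := by
    rw [intervalIntegral.integrableOn_Ioo_rpow_iff hr, Nat.cast_sub hn, Nat.cast_one]
    linarith
  refine hpow.congr_fun (fun y hy => ?_) measurableSet_Ioo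
  dsimp only
  rw [smul_eq_mul, rpow_add hy.1, rpow_natCast]

theorem setIntegral_rpow_norm_ball {r : ℝ} (hr : 0 < r) (γ : ℝ) :
    ∫ x in ball 0 r, ‖x‖ ^ γ ∂μ = r ^ (finrank ℝ E + γ) * ∫ x in ball 0 1, ‖x‖ ^ γ ∂μ := by
  have := Measure.setIntegral_comp_smul_of_pos μ (fun x => ‖x‖ ^ γ) (ball 0 1) hr
  rw [smul_unitBall_of_pos hr] at this
  simp only [norm_smul, norm_of_nonneg hr.le, mul_rpow hr.le (norm_nonneg _),
    integral_const_mul, smul_eq_mul] at this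
  rw [rpow_add hr, rpow_natCast, mul_assoc, this]
  field_simp

end NormedSpace

section Cube

variable {N : ℕ}

theorem volume_locCube (a : Fin N → ℝ) {h : ℝ} (hh : 0 ≤ h) :
    volume (locCube N a h) = ENNReal.ofReal (h ^ N) := by
  rw [locCube, volume_pi_pi]
  simp [Real.volume_Icc, ENNReal.ofReal_pow hh]

theorem norm_toLp_sub_toLp_le {a x : Fin N → ℝ} {h : ℝ} (hh : 0 ≤ h)
    (hx : x ∈ locCube N a h) :
    ‖(toLp 2 x - toLp 2 a : EuclideanSpace ℝ (Fin N))‖ ≤ √N * (h / 2) := by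
  have hcoord : ∀ i, ‖x i - a i‖ ^ 2 ≤ (h / 2) ^ 2 := fun i => by
    have hi := hx i (mem_univ i)
    exact pow_le_pow_left₀ (norm_nonneg _) (abs_le.2 ⟨by linarith [hi.1], by linarith [hi.2]⟩) 2
  rw [← toLp_sub, EuclideanSpace.norm_eq]
  calc √(∑ i, ‖x i - a i‖ ^ 2) ≤ √(∑ _ : Fin N, (h / 2) ^ 2) :=
        sqrt_le_sqrt (Finset.sum_le_sum fun i _ => hcoord i)
    _ = √N * (h / 2) := by
        rw [Finset.sum_const, Finset.card_univ, Fintype.card_fin, nsmul_eq_mul,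
          sqrt_mul (Nat.cast_nonneg N), sqrt_sq (by linarith)]

theorem apLocQuantity_le_rpow {p : ℝ} (hp : 1 < p) {w : (Fin N → ℝ) → ℝ}
    (hw : ∀ x, 0 ≤ w x) {a : Fin N → ℝ} {h K m : ℝ} (hh : 0 < h) (hm : 0 < m)
    (h₁ : ∫ x in locCube N a h, w x ≤ K * m * h ^ N)
    (h₂ : ∫ x in locCube N a h, w x ^ (1 - p / (p - 1)) ≤ K * m ^ (1 - p / (p - 1)) * h ^ N) :
    apLocQuantity N p w a h ≤ K ^ p := by
  have hp₁ : 0 < p - 1 := by linarith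
  have hhN : 0 < h ^ N := pow_pos hh N
  have hexp : p / (p / (p - 1)) = p - 1 := by field_simp
  have hdual : (1 - p / (p - 1)) * (p - 1) = -1 := by field_simp; ring
  have hI₁ : 0 ≤ ∫ x in locCube N a h, w x := integral_nonneg hw
  have hI₂ : 0 ≤ ∫ x in locCube N a h, w x ^ (1 - p / (p - 1)) :=
    integral_nonneg fun x => rpow_nonneg (hw x) _
  have hK : 0 ≤ K := nonneg_of_mul_nonneg_left (nonneg_of_mul_nonneg_left (hI₁.trans h₁) hhN) hm
  have e₁ : (∫ x in locCube N a h, w x) / h ^ N ≤ K * m := by rwa [div_le_iff₀ hhN]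
  have e₂ : (h ^ N)⁻¹ * ∫ x in locCube N a h, w x ^ (1 - p / (p - 1)) ≤
      K * m ^ (1 - p / (p - 1)) := by rwa [inv_mul_le_iff₀ hhN, mul_comm (h ^ N)]
  rw [apLocQuantity, if_neg hp.ne', hexp]
  calc _ ≤ K * m * (K * m ^ (1 - p / (p - 1))) ^ (p - 1) :=
        mul_le_mul e₁ (rpow_le_rpow (by positivity) e₂ hp₁.le) (by positivity) (by positivity)
    _ = K ^ (1 + (p - 1)) := by
        rw [mul_rpow hK (rpow_nonneg hm.le _), ← rpow_mul hm.le, hdual, rpow_neg_one,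
          rpow_add' hK (by linarith), rpow_one]
        field_simp
    _ = K ^ p := by rw [add_sub_cancel]

end Cube

section Weight

variable {N : ℕ}

theorem integrableOn_rpow_norm_toLp_ball [NeZero N] {c : ℝ} (hc : -(N : ℝ) < c) (r : ℝ) :
    IntegrableOn (fun x : Fin N → ℝ => ‖toLp 2 x‖ ^ c)
      (toLp 2 ⁻¹' ball (0 : EuclideanSpace ℝ (Fin N)) r) := by
  rw [← finrank_euclideanSpace_fin (𝕜 := ℝ) (n := N)] at hc
  exact ((PiLp.volume_preserving_toLp (Fin N)).integrableOn_comp_preimage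
    (MeasurableEquiv.toLp 2 (Fin N → ℝ)).measurableEmbedding).2
    (integrableOn_rpow_norm_ball volume hc r)

theorem setIntegral_rpow_norm_toLp_ball {r : ℝ} (hr : 0 < r) (c : ℝ) :
    ∫ x in toLp 2 ⁻¹' ball (0 : EuclideanSpace ℝ (Fin N)) r, ‖toLp 2 x‖ ^ c =
      r ^ ((N : ℝ) + c) * ∫ y in ball (0 : EuclideanSpace ℝ (Fin N)) 1, ‖y‖ ^ c := by
  rw [(PiLp.volume_preserving_toLp (Fin N)).setIntegral_preimage_emb
    (MeasurableEquiv.toLp 2 (Fin N → ℝ)).measurableEmbedding (fun y => ‖y‖ ^ c),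
    setIntegral_rpow_norm_ball volume hr, finrank_euclideanSpace_fin]

theorem integrableOn_powExpProfile_ball [NeZero N] {c : ℝ} (hc : -(N : ℝ) < c) (d r : ℝ) :
    IntegrableOn (fun x : Fin N → ℝ => powExpProfile c d ‖toLp 2 x‖)
      (toLp 2 ⁻¹' ball (0 : EuclideanSpace ℝ (Fin N)) r) := by
  set T := max r 1
  refine ((integrableOn_rpow_norm_toLp_ball hc r).const_mul (T ^ |c| * exp (|d| * T))).mono'
    ((measurable_powExpProfile c d).comp (by fun_prop)).aestronglyMeasurable
    (ae_restrict_of_forall_mem (measurableSet_ball.preimage (by fun_prop)) fun x hx => ?_)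
  rw [norm_of_nonneg (powExpProfile_nonneg c d (norm_nonneg _))]
  exact powExpProfile_le_mul_rpow (le_max_right r 1) (norm_nonneg _)
    ((mem_ball_zero_iff.1 hx).le.trans (le_max_left r 1))

theorem exists_setIntegral_powExpProfile_le_of_near [NeZero N] {c : ℝ} (hc : -(N : ℝ) < c)
    (d : ℝ) : ∃ B, ∀ (a : Fin N → ℝ) (h : ℝ), 0 < h → h ≤ 1 →
      ‖(toLp 2 a : EuclideanSpace ℝ (Fin N))‖ ≤ 2 * √N * h →
      ∫ x in locCube N a h, powExpProfile c d ‖toLp 2 x‖ ≤ B * h ^ c * h ^ N := by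
  set R := 3 * √N
  have hsqrt : (1 : ℝ) ≤ √N := one_le_sqrt.2 (Nat.one_le_cast.2 NeZero.one_le)
  have hR : 1 ≤ R := by linarith
  set K := R ^ |c| * exp (|d| * R)
  refine ⟨K * R ^ ((N : ℝ) + c) * ∫ y in ball (0 : EuclideanSpace ℝ (Fin N)) 1, ‖y‖ ^ c,
    fun a h hh hh₁ hnear => ?_⟩
  set S := toLp 2 ⁻¹' ball (0 : EuclideanSpace ℝ (Fin N)) (R * h)
  have hS : MeasurableSet S := measurableSet_ball.preimage (by fun_prop)
  have hQS : locCube N a h ⊆ S := fun x hx => by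
    have hdist := norm_toLp_sub_toLp_le hh.le hx
    have htri := norm_le_norm_add_norm_sub' (toLp 2 x : EuclideanSpace ℝ (Fin N)) (toLp 2 a)
    rw [mem_preimage, mem_ball_zero_iff]
    have : 0 < √N * h := mul_pos (by linarith) hh
    linarith
  have hW : ∀ x ∈ S, powExpProfile c d ‖toLp 2 x‖ ≤ K * ‖toLp 2 x‖ ^ c := fun x hx => by
    refine powExpProfile_le_mul_rpow hR (norm_nonneg _) ((mem_ball_zero_iff.1 hx).le.trans ?_)
    nlinarith
  calc ∫ x in locCube N a h, powExpProfile c d ‖toLp 2 x‖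
      ≤ ∫ x in S, powExpProfile c d ‖toLp 2 x‖ :=
        setIntegral_mono_set (integrableOn_powExpProfile_ball hc d _)
          (ae_of_all _ fun x => powExpProfile_nonneg c d (norm_nonneg _)) hQS.eventuallyLE
    _ ≤ ∫ x in S, K * ‖toLp 2 x‖ ^ c :=
        setIntegral_mono_on (integrableOn_powExpProfile_ball hc d _)
          ((integrableOn_rpow_norm_toLp_ball hc _).const_mul K) hS hW
    _ = K * ((R * h) ^ ((N : ℝ) + c) * ∫ y in ball (0 : EuclideanSpace ℝ (Fin N)) 1, ‖y‖ ^ c) := by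
        rw [integral_const_mul, setIntegral_rpow_norm_toLp_ball (by positivity)]
    _ = _ := by
        rw [mul_rpow (by positivity) hh.le, add_comm (N : ℝ), rpow_add hh, rpow_natCast]
        ring

theorem setIntegral_powExpProfile_le_of_far (c d : ℝ) {a : Fin N → ℝ} {h : ℝ} (hh : 0 < h)
    (hh₁ : h ≤ 1) (hfar : 2 * √N * h < ‖(toLp 2 a : EuclideanSpace ℝ (Fin N))‖) :
    ∫ x in locCube N a h, powExpProfile c d ‖toLp 2 x‖ ≤
      (4 / 3) ^ |c| * exp (|d| * √N) * powExpProfile c d ‖toLp 2 a‖ * h ^ N := by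
  have hpt : ∀ x ∈ locCube N a h, ‖powExpProfile c d ‖toLp 2 x‖‖ ≤
      (4 / 3) ^ |c| * exp (|d| * √N) * powExpProfile c d ‖toLp 2 a‖ := fun x hx => by
    have hdist : |‖toLp 2 x‖ - ‖toLp 2 a‖| ≤ √N * (h / 2) :=
      (abs_norm_sub_norm_le (toLp 2 x : EuclideanSpace ℝ (Fin N)) _).trans
        (norm_toLp_sub_toLp_le hh.le hx)
    obtain ⟨hlo, hhi⟩ := abs_le.1 hdist
    have : 0 ≤ √N * h := by positivity
    rw [norm_of_nonneg (powExpProfile_nonneg c d (norm_nonneg _))]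
    refine (powExpProfile_le_mul_of_ratio (b := 4 / 3) (by norm_num)
      (norm_nonneg (toLp 2 a : EuclideanSpace ℝ (Fin N))) ?_ ?_).trans ?_
    · linarith
    · linarith
    · refine mul_le_mul_of_nonneg_right
        (mul_le_mul_of_nonneg_left (exp_le_exp.2 ?_) (by positivity))
        (powExpProfile_nonneg c d (norm_nonneg _))
      gcongr
      nlinarith
  calc ∫ x in locCube N a h, powExpProfile c d ‖toLp 2 x‖
      ≤ ‖∫ x in locCube N a h, powExpProfile c d ‖toLp 2 x‖‖ := le_norm_self _
    _ ≤ _ * volume.real (locCube N a h) := norm_setIntegral_le_of_norm_le_const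
        (by rw [volume_locCube a hh.le]; exact ENNReal.ofReal_lt_top) hpt
    _ = _ := by rw [measureReal_def, volume_locCube a hh.le, ENNReal.toReal_ofReal (by positivity)]

noncomputable def cubeScale (c d : ℝ) (a : Fin N → ℝ) (h : ℝ) : ℝ :=
  if ‖(toLp 2 a : EuclideanSpace ℝ (Fin N))‖ ≤ 2 * √N * h then h ^ c
  else powExpProfile c d ‖toLp 2 a‖

theorem cubeScale_pos (c d : ℝ) (a : Fin N → ℝ) {h : ℝ} (hh : 0 < h) : 0 < cubeScale c d a h := by
  unfold cubeScale
  split_ifs with hnear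
  · exact rpow_pos_of_pos hh c
  · exact powExpProfile_pos c d ((by positivity : 0 ≤ 2 * √N * h).trans_lt (not_le.1 hnear))

theorem cubeScale_rpow (c d e : ℝ) (a : Fin N → ℝ) {h : ℝ} (hh : 0 < h) :
    cubeScale c d a h ^ e = cubeScale (c * e) (d * e) a h := by
  unfold cubeScale
  split_ifs
  · exact (rpow_mul hh.le c e).symm
  · exact powExpProfile_rpow c d e (norm_nonneg _)

theorem exists_setIntegral_powExpProfile_le_cubeScale [NeZero N] {c : ℝ} (hc : -(N : ℝ) < c)
    (d : ℝ) : ∃ K, ∀ (a : Fin N → ℝ) (h : ℝ), 0 < h → h ≤ 1 →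
      ∫ x in locCube N a h, powExpProfile c d ‖toLp 2 x‖ ≤ K * cubeScale c d a h * h ^ N := by
  obtain ⟨B, hB⟩ := exists_setIntegral_powExpProfile_le_of_near hc d
  refine ⟨max B ((4 / 3) ^ |c| * exp (|d| * √N)), fun a h hh hh₁ => ?_⟩
  have hscale := (cubeScale_pos c d a hh).le
  unfold cubeScale at hscale ⊢
  split_ifs at hscale ⊢ with hnear
  · refine (hB a h hh hh₁ hnear).trans ?_
    gcongr
    exact le_max_left _ _
  · refine (setIntegral_powExpProfile_le_of_far c d hh hh₁ (not_le.1 hnear)).trans ?_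
    gcongr
    exact le_max_right _ _

theorem locallyIntegrable_powExpProfile [NeZero N] {c : ℝ} (hc : -(N : ℝ) < c) (d : ℝ) :
    LocallyIntegrable fun x : Fin N → ℝ => powExpProfile c d ‖toLp 2 x‖ := fun x₀ =>
  ⟨toLp 2 ⁻¹' ball 0 (‖(toLp 2 x₀ : EuclideanSpace ℝ (Fin N))‖ + 1),
    (isOpen_ball.preimage (PiLp.continuous_toLp 2 _)).mem_nhds (mem_ball_zero_iff.2 (lt_add_one _)),
    integrableOn_powExpProfile_ball hc d _⟩

theorem memApLoc_powExpProfile [NeZero N] {p c : ℝ} (hp : 1 < p) (hc₁ : -(N : ℝ) < c)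
    (hc₂ : c < N * (p - 1)) (d : ℝ) :
    MemApLoc N p fun x => powExpProfile c d ‖toLp 2 x‖ := by
  have hp₁ : p - 1 ≠ 0 := by linarith
  have hβ : 1 - p / (p - 1) = -(p - 1)⁻¹ := by field_simp; ring
  have hcβ : -(N : ℝ) < c * (1 - p / (p - 1)) := by
    rw [hβ, mul_neg, ← div_eq_mul_inv, neg_lt_neg_iff, div_lt_iff₀ (by linarith)]
    exact hc₂
  refine ⟨locallyIntegrable_powExpProfile hc₁ d, ?_, ?_⟩
  · filter_upwards [compl_mem_ae_iff.2 (measure_singleton (0 : Fin N → ℝ))] with x hx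
    exact powExpProfile_pos c d (norm_pos_iff.2 ((toLp_eq_zero 2).not.2 hx))
  obtain ⟨K₁, hK₁⟩ := exists_setIntegral_powExpProfile_le_cubeScale hc₁ d
  obtain ⟨K₂, hK₂⟩ := exists_setIntegral_powExpProfile_le_cubeScale hcβ (d * (1 - p / (p - 1)))
  refine ⟨max K₁ K₂ ^ p, fun a h hh hhN => ?_⟩
  have hh₁ : h ≤ 1 := (pow_le_one_iff_of_nonneg hh.le (NeZero.ne N)).1 hhN
  refine apLocQuantity_le_rpow hp (fun x => powExpProfile_nonneg c d (norm_nonneg _)) hh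
    (cubeScale_pos c d a hh) ((hK₁ a h hh hh₁).trans ?_) ?_
  · have := (cubeScale_pos c d a hh).le
    gcongr
    exact le_max_left _ _
  · simp_rw [powExpProfile_rpow c d _ (norm_nonneg _), cubeScale_rpow c d _ a hh]
    refine (hK₂ a h hh hh₁).trans ?_
    have := (cubeScale_pos (c * (1 - p / (p - 1))) (d * (1 - p / (p - 1))) a hh).le
    gcongr
    exact le_max_right _ _

end Weight

theorem memApLoc_example_general (N : ℕ) (p α : ℝ) (hp : 1 < p)
    (hα₁ : -(N : ℝ) < α) (hα₂ : α < (N : ℝ) * (p - 1)) :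
    MemApLoc N p (fun x =>
      if Real.sqrt (∑ i, (x i) ^ 2) ≤ 1 then (Real.sqrt (∑ i, (x i) ^ 2)) ^ α
      else Real.exp (Real.sqrt (∑ i, (x i) ^ 2) - 1)) := by
  have : NeZero N := ⟨by rintro rfl; simp at hα₁ hα₂; linarith⟩
  convert memApLoc_powExpProfile hp hα₁ hα₂ 1 using 2 with x
  rw [EuclideanSpace.norm_eq]
  simp only [Real.norm_eq_abs, sq_abs]
  unfold powExpProfile
  split_ifs with hx
  · rw [min_eq_left hx, max_eq_right (by linarith), mul_zero, exp_zero, mul_one]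
  · rw [min_eq_right (by linarith), max_eq_left (by linarith), one_rpow, one_mul, one_mul]

theorem memApLoc_example (N : ℕ) (hN : 1 ≤ N) (p α : ℝ) (hp : 1 < p)
    (hα₁ : -(N : ℝ) < α) (hα₂ : α < (N : ℝ) * (p - 1)) :
    MemApLoc N p (fun x =>
      if Real.sqrt (∑ i, (x i) ^ 2) ≤ 1 then (Real.sqrt (∑ i, (x i) ^ 2)) ^ α
      else Real.exp (Real.sqrt (∑ i, (x i) ^ 2) - 1)) :=
  memApLoc_example_general N p α hp hα₁ hα₂
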